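/- For α > -1 and nonnegative integer n, the smallest eigenvalue λ_s of the positive definite Hankel matrix ((α+1)_{j+k})_{0≤j,k≤n} satisfies λ_s ≥ ( Σ_{ℓ=0}^{n} (ℓ!/(α+1)_ℓ) · L_ℓ^{(α)}(-1)² )^{-1}. -/

import Mathlib

/-!
Let `B` be the matrix whose rows are the coefficients of the orthonormal Laguerre polynomials
`√(ℓ!/(α+1)_ℓ) L_ℓ^{(α)}` and `M` the moment matrix. Orthonormality reads `B M Bᵀ = 1`, i.e.
`M⁻¹ = Bᵀ B`, so every eigenvalue `λ` of `M` satisfies `1/λ ≤ tr M⁻¹ = ∑ B_{ℓk}²`. The coefficients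
of `L_ℓ^{(α)}` alternate in sign, hence `∑_k B_{ℓk}² ≤ (∑_k |B_{ℓk}|)² = (ℓ!/(α+1)_ℓ) L_ℓ^{(α)}(-1)²`.
Orthogonality is checked on moments: `∑_k (coefficient of xᵏ in L_m) (α+1)_{k+j}` is a multiple of
the `m`-th forward difference of `k ↦ (α+1+k)_j`, which vanishes for `j < m`.
-/

/-- The shifted factorial (x)ₙ. -/
noncomputable def poch (x : ℝ) (n : ℕ) : ℝ := ∏ i ∈ Finset.range n, (x + i)

/-- The Laguerre polynomial L_ℓ^{(α)} evaluated at x = -1: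
L_ℓ^{(α)}(x) = ((α+1)_ℓ/ℓ!) Σ_{k=0}^{ℓ} (-ℓ)_k x^k / ((α+1)_k k!). -/
noncomputable def laguerreAtNegOne (α : ℝ) (ℓ : ℕ) : ℝ :=
  poch (α+1) ℓ / (Nat.factorial ℓ : ℝ) *
    ∑ k ∈ Finset.range (ℓ+1),
      poch (-(ℓ:ℝ)) k * (-1:ℝ)^k / (poch (α+1) k * (Nat.factorial k : ℝ))

open Finset Matrix fwdDiff
open scoped Nat

lemma poch_zero (x : ℝ) : poch x 0 = 1 := by
  simp [poch]

lemma poch_succ (x : ℝ) (n : ℕ) : poch x (n + 1) = poch x n * (x + n) :=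
  prod_range_succ _ _

lemma poch_add (x : ℝ) (a b : ℕ) : poch x (a + b) = poch x a * poch (x + a) b := by
  simp only [poch, prod_range_add, Nat.cast_add, add_assoc]

lemma poch_succ' (x : ℝ) (n : ℕ) : poch x (n + 1) = x * poch (x + 1) n := by
  rw [add_comm n, poch_add]
  simp [poch]

lemma poch_eq_eval_ascPochhammer (x : ℝ) (n : ℕ) : poch x n = (ascPochhammer ℝ n).eval x := by
  induction n with
  | zero => simp [poch_zero]
  | succ n ih => rw [poch_succ, ih, ascPochhammer_succ_eval]

lemma poch_pos {x : ℝ} (hx : 0 < x) (n : ℕ) : 0 < poch x n := by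
  rw [poch_eq_eval_ascPochhammer]
  exact ascPochhammer_pos n x hx

lemma poch_neg_natCast (m k : ℕ) : poch (-(m : ℝ)) k = (-1) ^ k * m.descFactorial k := by
  rw [poch_eq_eval_ascPochhammer, ascPochhammer_eval_neg_eq_descPochhammer,
    descPochhammer_eval_eq_descFactorial]

lemma fwdDiff_poch (c : ℝ) (j : ℕ) :
    Δ_[1] (fun k : ℕ ↦ poch (c + k) (j + 1)) = (j + 1 : ℝ) • fun k : ℕ ↦ poch (c + 1 + k) j := by
  ext k
  simp only [fwdDiff, Pi.smul_apply, smul_eq_mul, Nat.cast_add, Nat.cast_one]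
  rw [poch_succ, poch_succ', show c + (k + 1) = c + 1 + k by ring, show c + k + 1 = c + 1 + k by ring]
  ring

lemma fwdDiff_iter_poch (c : ℝ) (m j : ℕ) :
    (Δ_[1])^[m] (fun k : ℕ ↦ poch (c + k) j) 0 = j.descFactorial m * poch (c + m) (j - m) := by
  induction m generalizing c j with
  | zero => simp
  | succ m ih =>
    rw [Function.iterate_succ_apply]
    cases j with
    | zero =>
      have hconst : Δ_[1] (fun k : ℕ ↦ poch (c + k) 0) = fun _ ↦ 0 := by
        simp only [poch_zero]
        exact fwdDiff_const 1 (1 : ℝ)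
      rw [hconst, Function.iterate_fixed (fwdDiff_const (1 : ℕ) (0 : ℝ))]
      simp
    | succ j =>
      rw [fwdDiff_poch, fwdDiff_iter_const_smul, Pi.smul_apply, ih, Nat.succ_descFactorial_succ,
        Nat.succ_sub_succ, smul_eq_mul]
      push_cast
      ring_nf

lemma sum_neg_one_pow_mul_choose_mul_poch (c : ℝ) (m j : ℕ) :
    ∑ k ∈ range (m + 1), (-1) ^ k * m.choose k * poch (c + k) j
      = (-1) ^ m * j.descFactorial m * poch (c + m) (j - m) := by
  rw [mul_assoc, ← fwdDiff_iter_poch, fwdDiff_iter_eq_sum_shift, mul_sum]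
  refine sum_congr rfl fun k hk ↦ ?_
  have hsign : (-1 : ℝ) ^ m * (-1) ^ (m - k) = (-1) ^ k := by
    rw [← pow_add, show m + (m - k) = k + 2 * (m - k) by have := mem_range.mp hk; omega, pow_add,
      pow_mul]
    norm_num
  simp only [zero_add, nsmul_eq_mul, mul_one, zsmul_eq_mul]
  push_cast
  rw [← hsign]
  ring

section Laguerre

variable {α : ℝ}

/-- The coefficient of `x ^ k` in `L_m^{(α)}(x)`. -/
noncomputable def laguerreCoeff (α : ℝ) (m k : ℕ) : ℝ :=
  poch (α + 1) m * poch (-(m : ℝ)) k / (m ! * (poch (α + 1) k * k !))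

lemma laguerreAtNegOne_eq_sum (α : ℝ) (ℓ : ℕ) :
    laguerreAtNegOne α ℓ = ∑ k ∈ range (ℓ + 1), (-1) ^ k * laguerreCoeff α ℓ k := by
  rw [laguerreAtNegOne, mul_sum]
  refine sum_congr rfl fun k _ ↦ ?_
  rw [laguerreCoeff]
  ring

lemma laguerreCoeff_eq_zero_of_lt (α : ℝ) {m k : ℕ} (h : m < k) : laguerreCoeff α m k = 0 := by
  simp [laguerreCoeff, poch_neg_natCast, Nat.descFactorial_eq_zero_iff_lt.mpr h]

lemma laguerreCoeff_self (hα : 0 < α + 1) (m : ℕ) : laguerreCoeff α m m = (-1) ^ m / m ! := by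
  have := (poch_pos hα m).ne'
  rw [laguerreCoeff, poch_neg_natCast, Nat.descFactorial_self]
  field_simp

lemma neg_one_pow_mul_laguerreCoeff_nonneg (hα : 0 < α + 1) (m k : ℕ) :
    0 ≤ (-1) ^ k * laguerreCoeff α m k := by
  have hsq : (-1 : ℝ) ^ k * (-1) ^ k = 1 := by rw [← mul_pow]; norm_num
  have := poch_pos hα m
  have := poch_pos hα k
  have hexpand : (-1) ^ k * laguerreCoeff α m k = (-1) ^ k * (-1) ^ k *
      (poch (α + 1) m * m.descFactorial k / (m ! * (poch (α + 1) k * k !))) := by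
    rw [laguerreCoeff, poch_neg_natCast]
    ring
  rw [hexpand, hsq, one_mul]
  positivity

lemma sum_laguerreCoeff_sq_le (hα : 0 < α + 1) (ℓ : ℕ) :
    ∑ k ∈ range (ℓ + 1), laguerreCoeff α ℓ k ^ 2 ≤ laguerreAtNegOne α ℓ ^ 2 := by
  rw [laguerreAtNegOne_eq_sum]
  calc ∑ k ∈ range (ℓ + 1), laguerreCoeff α ℓ k ^ 2
      = ∑ k ∈ range (ℓ + 1), ((-1) ^ k * laguerreCoeff α ℓ k) ^ 2 := by
        refine sum_congr rfl fun k _ ↦ ?_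
        rw [mul_pow, ← pow_mul, pow_mul', neg_one_sq, one_pow, one_mul]
    _ ≤ _ := sum_sq_le_sq_sum_of_nonneg fun k _ ↦ neg_one_pow_mul_laguerreCoeff_nonneg hα ℓ k

/-- `∫ xʲ L_m^{(α)}(x) x^α e^{-x} dx / Γ(α+1)`, computed from the moments `(α+1)_{k+j}`. -/
lemma sum_laguerreCoeff_mul_poch (hα : 0 < α + 1) (m j : ℕ) :
    ∑ k ∈ range (m + 1), laguerreCoeff α m k * poch (α + 1) (k + j)
      = (-1) ^ m * poch (α + 1) m / m ! * j.descFactorial m * poch (α + 1 + m) (j - m) := by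
  have hterm : ∀ k ∈ range (m + 1), laguerreCoeff α m k * poch (α + 1) (k + j)
      = poch (α + 1) m / m ! * ((-1) ^ k * m.choose k * poch (α + 1 + k) j) := fun k _ ↦ by
    have := (poch_pos hα k).ne'
    rw [laguerreCoeff, poch_neg_natCast, poch_add, Nat.descFactorial_eq_factorial_mul_choose]
    push_cast
    field_simp
  rw [sum_congr rfl hterm, ← mul_sum, sum_neg_one_pow_mul_choose_mul_poch]
  ring

end Laguerre

lemma mulVec_dotProduct_self_le {ι κ : Type*} [Fintype ι] [Fintype κ] (A : Matrix ι κ ℝ)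
    (u : κ → ℝ) : (A *ᵥ u) ⬝ᵥ (A *ᵥ u) ≤ (∑ i, ∑ j, A i j ^ 2) * (u ⬝ᵥ u) := by
  have hu : u ⬝ᵥ u = ∑ j, u j ^ 2 := by simp only [dotProduct, sq]
  rw [hu, sum_mul]
  refine sum_le_sum fun i _ ↦ ?_
  rw [← sq]
  exact sum_mul_sq_le_sq_mul_sq univ (A i) u

lemma inv_le_of_hasEigenvalue_of_mul_mul_transpose_eq_one {ι : Type*} [Fintype ι] [DecidableEq ι]
    {B M : Matrix ι ι ℝ} (hBM : B * M * Bᵀ = 1) {μ : ℝ}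
    (hμ : Module.End.HasEigenvalue (toLin' M) μ) {T : ℝ} (hT : ∑ i, ∑ j, B i j ^ 2 ≤ T) :
    T⁻¹ ≤ μ := by
  obtain ⟨v, hv⟩ := hμ.exists_hasEigenvector
  have hMv : M *ᵥ v = μ • v := by simpa only [toLin'_apply] using hv.apply_eq_smul
  have hBt : Bᵀ * (M * Bᵀ)ᵀ = 1 := by
    rw [← transpose_mul, mul_eq_one_comm.mp (by rwa [← Matrix.mul_assoc]), transpose_one]
  obtain ⟨u, hvu⟩ : ∃ u : ι → ℝ, Bᵀ *ᵥ u = v :=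
    ⟨(M * Bᵀ)ᵀ *ᵥ v, by rw [mulVec_mulVec, hBt, one_mulVec]⟩
  have huu : u ⬝ᵥ u = μ * (v ⬝ᵥ v) := by
    calc u ⬝ᵥ u = v ⬝ᵥ M *ᵥ v := by
          rw [← hvu, mulVec_mulVec, dotProduct_mulVec, mulVec_transpose, vecMul_vecMul,
            ← Matrix.mul_assoc, hBM, vecMul_one]
      _ = μ * (v ⬝ᵥ v) := by rw [hMv, dotProduct_smul, smul_eq_mul]
  have hvv : v ⬝ᵥ v ≤ T * (u ⬝ᵥ u) := by
    calc v ⬝ᵥ v ≤ (∑ i, ∑ j, Bᵀ i j ^ 2) * (u ⬝ᵥ u) := hvu ▸ mulVec_dotProduct_self_le Bᵀ u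
      _ ≤ T * (u ⬝ᵥ u) := by
        rw [sum_comm]
        exact mul_le_mul_of_nonneg_right hT (dotProduct_self_star_nonneg u)
  have hv0 : 0 < v ⬝ᵥ v :=
    (dotProduct_self_star_nonneg v).lt_of_ne fun h ↦ hv.2 (dotProduct_self_eq_zero.mp h.symm)
  have hT0 : 0 ≤ T := (sum_nonneg fun i _ ↦ sum_nonneg fun j _ ↦ sq_nonneg (B i j)).trans hT
  have hTμ : 1 ≤ T * μ := by nlinarith
  have hTpos : 0 < T := hT0.lt_of_ne (by rintro rfl; linarith)
  exact (inv_le_iff_one_le_mul₀' hTpos).mpr hTμ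

section LaguerreMatrix

variable {α : ℝ} {n : ℕ}

noncomputable def momentMatrix (α : ℝ) (n : ℕ) : Matrix (Fin (n + 1)) (Fin (n + 1)) ℝ :=
  of fun j k ↦ poch (α + 1) (j.1 + k.1)

noncomputable def laguerreMatrix (α : ℝ) (n : ℕ) : Matrix (Fin (n + 1)) (Fin (n + 1)) ℝ :=
  of fun ℓ k ↦ laguerreCoeff α ℓ k

/-- Rows of `laguerreMatrix` rescaled to unit norm, `‖L_ℓ^{(α)}‖² = (α+1)_ℓ / ℓ!`. -/
noncomputable def orthonormalLaguerreMatrix (α : ℝ) (n : ℕ) :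
    Matrix (Fin (n + 1)) (Fin (n + 1)) ℝ :=
  diagonal (fun ℓ : Fin (n + 1) ↦ √(ℓ.1 ! / poch (α + 1) ℓ)) * laguerreMatrix α n

lemma momentMatrix_transpose : (momentMatrix α n)ᵀ = momentMatrix α n := by
  ext j k
  simp only [momentMatrix, transpose_apply, of_apply, add_comm]

lemma sum_fin_laguerreCoeff_mul {m : ℕ} (hm : m < n + 1) (f : ℕ → ℝ) :
    ∑ k : Fin (n + 1), laguerreCoeff α m k * f k
      = ∑ k ∈ range (m + 1), laguerreCoeff α m k * f k := by
  rw [Fin.sum_univ_eq_sum_range (fun k ↦ laguerreCoeff α m k * f k)]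
  refine (sum_subset (range_subset_range.mpr hm) fun k hk hkm ↦ ?_).symm
  rw [laguerreCoeff_eq_zero_of_lt α (by simp only [mem_range] at hk hkm; omega), zero_mul]

lemma laguerreMatrix_mul_momentMatrix_apply (hα : 0 < α + 1) (ℓ j : Fin (n + 1)) :
    (laguerreMatrix α n * momentMatrix α n) ℓ j
      = (-1) ^ ℓ.1 * poch (α + 1) ℓ / ℓ.1 ! * j.1.descFactorial ℓ * poch (α + 1 + ℓ) (j - ℓ) := by
  simp only [mul_apply, laguerreMatrix, momentMatrix, of_apply]
  rw [sum_fin_laguerreCoeff_mul ℓ.2 (fun k ↦ poch (α + 1) (k + j)), sum_laguerreCoeff_mul_poch hα]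

/-- Orthogonality of the Laguerre polynomials: only `ℓ ≤ j ≤ m` contribute to the `(ℓ, m)` entry,
since `x ^ j` is orthogonal to `L_ℓ` for `j < ℓ` and `L_m` has degree `m`. -/
lemma laguerreMatrix_mul_momentMatrix_mul_transpose (hα : 0 < α + 1) :
    laguerreMatrix α n * momentMatrix α n * (laguerreMatrix α n)ᵀ
      = diagonal fun ℓ : Fin (n + 1) ↦ poch (α + 1) ℓ / ℓ.1 ! := by
  have hterm : ∀ ℓ m j : Fin (n + 1), j < ℓ ∨ m < j →
      (laguerreMatrix α n * momentMatrix α n) ℓ j * (laguerreMatrix α n)ᵀ j m = 0 := by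
    rintro ℓ m j (hj | hj)
    · rw [laguerreMatrix_mul_momentMatrix_apply hα, Nat.descFactorial_eq_zero_iff_lt.mpr hj]
      simp
    · rw [transpose_apply, laguerreMatrix, of_apply, laguerreCoeff_eq_zero_of_lt α hj, mul_zero]
  have hlower : ∀ ℓ m : Fin (n + 1), m < ℓ →
      (laguerreMatrix α n * momentMatrix α n * (laguerreMatrix α n)ᵀ) ℓ m = 0 := fun ℓ m hml ↦
    (mul_apply ..).trans <|
      sum_eq_zero fun j _ ↦ hterm ℓ m j ((lt_or_ge j ℓ).imp_right hml.trans_le)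
  have hsymm : (laguerreMatrix α n * momentMatrix α n * (laguerreMatrix α n)ᵀ)ᵀ
      = laguerreMatrix α n * momentMatrix α n * (laguerreMatrix α n)ᵀ := by
    simp only [transpose_mul, transpose_transpose, momentMatrix_transpose, Matrix.mul_assoc]
  ext ℓ m
  rcases lt_trichotomy ℓ m with hlm | rfl | hml
  · rw [diagonal_apply_ne _ hlm.ne, ← hsymm, transpose_apply, hlower m ℓ hlm]
  · have := (poch_pos hα ℓ).ne'
    rw [diagonal_apply_eq, mul_apply, sum_eq_single ℓ (fun j _ hj ↦ hterm ℓ ℓ j (lt_or_gt_of_ne hj))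
      (by simp), laguerreMatrix_mul_momentMatrix_apply hα, transpose_apply, laguerreMatrix, of_apply,
      laguerreCoeff_self hα, Nat.descFactorial_self, Nat.sub_self, poch_zero]
    field_simp
    rw [← pow_mul, pow_mul', neg_one_sq, one_pow]
  · rw [diagonal_apply_ne _ hml.ne', hlower ℓ m hml]

lemma orthonormalLaguerreMatrix_mul_momentMatrix_mul_transpose (hα : 0 < α + 1) :
    orthonormalLaguerreMatrix α n * momentMatrix α n * (orthonormalLaguerreMatrix α n)ᵀ = 1 := by
  have hnorm : ∀ ℓ : Fin (n + 1),
      √(ℓ.1 ! / poch (α + 1) ℓ) * (poch (α + 1) ℓ / ℓ.1 !) * √(ℓ.1 ! / poch (α + 1) ℓ) = 1 := by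
    intro ℓ
    have := poch_pos hα ℓ
    rw [mul_right_comm, Real.mul_self_sqrt (by positivity)]
    field_simp
  simp only [orthonormalLaguerreMatrix, transpose_mul, diagonal_transpose, ← Matrix.mul_assoc]
  rw [Matrix.mul_assoc (diagonal _), Matrix.mul_assoc (diagonal _),
    laguerreMatrix_mul_momentMatrix_mul_transpose hα, diagonal_mul_diagonal, diagonal_mul_diagonal, ← diagonal_one]
  exact congrArg diagonal (funext hnorm)

lemma sum_sq_orthonormalLaguerreMatrix_le (hα : 0 < α + 1) (ℓ : Fin (n + 1)) :
    ∑ k, orthonormalLaguerreMatrix α n ℓ k ^ 2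
      ≤ ℓ.1 ! / poch (α + 1) ℓ * laguerreAtNegOne α ℓ ^ 2 := by
  have hnorm : 0 ≤ (ℓ.1 ! : ℝ) / poch (α + 1) ℓ := by have := poch_pos hα ℓ; positivity
  simp only [orthonormalLaguerreMatrix, diagonal_mul, laguerreMatrix, of_apply, mul_pow,
    ← mul_sum, Real.sq_sqrt hnorm]
  gcongr
  have hrange := sum_fin_laguerreCoeff_mul (α := α) ℓ.2 (laguerreCoeff α ℓ)
  simp only [← sq] at hrange
  exact hrange ▸ sum_laguerreCoeff_sq_le hα ℓ

end LaguerreMatrix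

/-- Every eigenvalue (in particular the smallest) of the Hankel matrix
((α+1)_{j+k})_{0≤j,k≤n} is at least (Σ_{ℓ=0}^n (ℓ!/(α+1)_ℓ) L_ℓ^{(α)}(-1)²)⁻¹. -/
theorem stmt_3 (α : ℝ) (hα : -1 < α) (n : ℕ) (μ : ℝ)
    (hμ : Module.End.HasEigenvalue
      (Matrix.toLin' (Matrix.of fun j k : Fin (n+1) => poch (α+1) (j.1 + k.1))) μ) :
    (∑ ℓ ∈ Finset.range (n+1),
        (Nat.factorial ℓ : ℝ) / poch (α+1) ℓ * (laguerreAtNegOne α ℓ)^2)⁻¹ ≤ μ := by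
  have hα' : 0 < α + 1 := by linarith
  refine inv_le_of_hasEigenvalue_of_mul_mul_transpose_eq_one
    (orthonormalLaguerreMatrix_mul_momentMatrix_mul_transpose hα') hμ ?_
  rw [← Fin.sum_univ_eq_sum_range (fun ℓ ↦ (ℓ ! : ℝ) / poch (α + 1) ℓ * laguerreAtNegOne α ℓ ^ 2)]
  exact sum_le_sum fun ℓ _ ↦ sum_sq_orthonormalLaguerreMatrix_le hα' ℓ
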